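/- Under hypothesis (H2): Y topological vector space, A closed proper subset with A - (0,∞)·k ⊆ int A for some k ≠ 0, one has A = cl(int A), core A = int A, and {y : φ_{A,k}(y) = t} = tk + bd A for all t ∈ ℝ; moreover if φ_{A,k} is proper, then φ_{A,k} is strictly quasiconvex if and only if A is a strictly convex set (λa¹ + (1-λ)a² ∈ int A for distinct a¹, a² ∈ A and λ ∈ (0,1)). -/

import Mathlib

open Set Pointwise

noncomputable def phiF {Y : Type*} [AddCommGroup Y] [Module ℝ Y] (A : Set Y) (k : Y) (y : Y) : EReal :=
  sInf ((fun t : ℝ => (t : EReal)) '' {t : ℝ | y - t • k ∈ A})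

def recCone {Y : Type*} [AddCommGroup Y] [Module ℝ Y] (A : Set Y) : Set Y :=
  {u | ∀ a ∈ A, ∀ t : ℝ, 0 ≤ t → a + t • u ∈ A}

def algInterior {Y : Type*} [AddCommGroup Y] [Module ℝ Y] (C : Set Y) : Set Y :=
  {x ∈ C | ∀ y : Y, ∃ ε : ℝ, 0 < ε ∧ ∀ t : ℝ, 0 ≤ t → t ≤ ε → x + t • y ∈ C}

/-!
Under (H2) the set `{t | y - t • k ∈ A}` is a closed up-ray `[φ y, ∞)` whose interior `(φ y, ∞)`
consists of the `t` with `y - t • k ∈ interior A`. Hence `φ y ≤ t ↔ y - t • k ∈ A` and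
`φ y < t ↔ y - t • k ∈ interior A`, which gives the level sets. For strict quasiconvexity, apply
strict convexity of `A` to the points `yᵢ - M • k ∈ A` with `M = max (φ y₁) (φ y₂)`; conversely,
points of `A` have `φ ≤ 0`, and `φ < 0` at a point means that it lies in `interior A`.
-/

open Filter Topology

section Algebraic

variable {Y : Type*} [AddCommGroup Y] [Module ℝ Y] {A : Set Y} {k y : Y}

lemma phiF_le_of_sub_smul_mem {t : ℝ} (h : y - t • k ∈ A) : phiF A k y ≤ t :=
  sInf_le ⟨t, h, rfl⟩

lemma phiF_ne_top_of_sub_smul_mem {t : ℝ} (h : y - t • k ∈ A) : phiF A k y ≠ ⊤ :=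
  ((phiF_le_of_sub_smul_mem h).trans_lt (EReal.coe_lt_top t)).ne

lemma exists_lt_sub_smul_mem_of_phiF_lt {c : ℝ} (h : phiF A k y < c) :
    ∃ s < c, y - s • k ∈ A := by
  obtain ⟨_, ⟨s, hs, rfl⟩, hsc⟩ := sInf_lt_iff.1 h
  exact ⟨s, EReal.coe_lt_coe_iff.1 hsc, hs⟩

lemma convex_setOf_exists_sub_smul_mem (hA : Convex ℝ A) (k : Y) :
    Convex ℝ {y | ∃ t : ℝ, y - t • k ∈ A} := by
  rintro y₁ ⟨t₁, ht₁⟩ y₂ ⟨t₂, ht₂⟩ a b ha hb hab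
  refine ⟨a * t₁ + b * t₂, ?_⟩
  convert hA ht₁ ht₂ ha hb hab using 1
  module

end Algebraic

section Interior

variable {Y : Type*} [AddCommGroup Y] [Module ℝ Y] [TopologicalSpace Y] {A : Set Y} {k y : Y}

lemma strictConvex_iff_forall_lt_one :
    StrictConvex ℝ A ↔ ∀ a₁ ∈ A, ∀ a₂ ∈ A, a₁ ≠ a₂ → ∀ l : ℝ, 0 < l → l < 1 →
      l • a₁ + (1 - l) • a₂ ∈ interior A := by
  refine ⟨fun hA a₁ h₁ a₂ h₂ hne l hl0 hl1 => hA h₁ h₂ hne hl0 (by linarith) (by ring),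
    fun hA a₁ h₁ a₂ h₂ hne a b ha hb hab => ?_⟩
  obtain rfl : b = 1 - a := by linarith
  exact hA a₁ h₁ a₂ h₂ hne a ha (by linarith)

lemma sub_smul_mem_interior_of_lt (hint : ∀ a ∈ A, ∀ t : ℝ, 0 < t → a - t • k ∈ interior A)
    {s t : ℝ} (hs : y - s • k ∈ A) (hst : s < t) : y - t • k ∈ interior A := by
  convert hint _ hs (t - s) (by linarith) using 1
  module

lemma algInterior_subset_interior_of_sub_smul
    (hint : ∀ a ∈ A, ∀ t : ℝ, 0 < t → a - t • k ∈ interior A) : algInterior A ⊆ interior A := by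
  rintro x ⟨-, hdir⟩
  obtain ⟨ε, hε, hseg⟩ := hdir k
  simpa using hint _ (hseg ε hε.le le_rfl) ε hε

end Interior

section Topological

variable {Y : Type*} [AddCommGroup Y] [Module ℝ Y] [TopologicalSpace Y]
    [IsTopologicalAddGroup Y] [ContinuousSMul ℝ Y] {A : Set Y} {k y : Y}

lemma interior_subset_algInterior (A : Set Y) : interior A ⊆ algInterior A := by
  intro x hx
  refine ⟨interior_subset hx, fun y => ?_⟩
  have hcont : Continuous fun t : ℝ => x + t • y := by fun_prop
  have hnhds : ∀ᶠ t in 𝓝 (0 : ℝ), x + t • y ∈ A :=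
    hcont.continuousAt.eventually_mem (by simpa using mem_interior_iff_mem_nhds.1 hx)
  obtain ⟨ε, hε, hball⟩ := Metric.eventually_nhds_iff_ball.1 hnhds
  refine ⟨ε / 2, by linarith, fun t ht0 htε => hball t ?_⟩
  rw [Metric.mem_ball, Real.dist_0_eq_abs, abs_of_nonneg ht0]
  linarith

lemma exists_lt_sub_smul_mem_interior {s : ℝ} (h : y - s • k ∈ interior A) :
    ∃ s' < s, y - s' • k ∈ interior A := by
  have hcont : Continuous fun t : ℝ => y - t • k := by fun_prop
  have hnhds : ∀ᶠ t in 𝓝[<] s, y - t • k ∈ interior A :=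
    nhdsWithin_le_nhds (hcont.continuousAt.eventually_mem (isOpen_interior.mem_nhds h))
  exact (hnhds.and self_mem_nhdsWithin).exists.imp fun s' h' => ⟨h'.2, h'.1⟩

lemma subset_closure_interior_of_sub_smul
    (hint : ∀ a ∈ A, ∀ t : ℝ, 0 < t → a - t • k ∈ interior A) : A ⊆ closure (interior A) := by
  intro a ha
  have hlim : Tendsto (fun t : ℝ => a - t • k) (𝓝[>] 0) (𝓝 a) := by
    have hcont : Continuous fun t : ℝ => a - t • k := by fun_prop
    simpa using hcont.continuousAt.tendsto.mono_left (nhdsWithin_le_nhds (a := (0 : ℝ)))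
  exact mem_closure_of_tendsto hlim (eventually_nhdsWithin_of_forall fun t ht => hint a ha t ht)

lemma phiF_lt_coe_iff (hint : ∀ a ∈ A, ∀ t : ℝ, 0 < t → a - t • k ∈ interior A) {t : ℝ} :
    phiF A k y < t ↔ y - t • k ∈ interior A := by
  constructor
  · intro h
    obtain ⟨s, hst, hs⟩ := exists_lt_sub_smul_mem_of_phiF_lt h
    exact sub_smul_mem_interior_of_lt hint hs hst
  · intro h
    obtain ⟨s, hst, hs⟩ := exists_lt_sub_smul_mem_interior h
    exact (phiF_le_of_sub_smul_mem (interior_subset hs)).trans_lt (EReal.coe_lt_coe_iff.2 hst)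

lemma phiF_le_coe_iff (hAc : IsClosed A)
    (hint : ∀ a ∈ A, ∀ t : ℝ, 0 < t → a - t • k ∈ interior A) {t : ℝ} :
    phiF A k y ≤ t ↔ y - t • k ∈ A := by
  refine ⟨fun h => ?_, phiF_le_of_sub_smul_mem⟩
  have hIoi : Ioi t ⊆ {s : ℝ | y - s • k ∈ A} := fun u hu =>
    interior_subset (s := A) ((phiF_lt_coe_iff hint).1 (h.trans_lt (EReal.coe_lt_coe_iff.2 hu)))
  have hclosed : IsClosed {s : ℝ | y - s • k ∈ A} :=
    hAc.preimage (by fun_prop : Continuous fun s : ℝ => y - s • k)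
  exact hclosed.closure_subset_iff.2 hIoi (by rw [closure_Ioi]; exact mem_Ici.2 le_rfl)

lemma phiF_eq_coe_iff (hAc : IsClosed A)
    (hint : ∀ a ∈ A, ∀ t : ℝ, 0 < t → a - t • k ∈ interior A) {t : ℝ} :
    phiF A k y = t ↔ y - t • k ∈ frontier A := by
  rw [eq_iff_le_not_lt, phiF_le_coe_iff hAc hint, phiF_lt_coe_iff hint, hAc.frontier_eq]
  rfl

lemma strictConvex_of_phiF_lt_max (hint : ∀ a ∈ A, ∀ t : ℝ, 0 < t → a - t • k ∈ interior A)
    (hsq : ∀ y₁ ∈ {y | ∃ t : ℝ, y - t • k ∈ A}, ∀ y₂ ∈ {y | ∃ t : ℝ, y - t • k ∈ A},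
      y₁ ≠ y₂ → ∀ l : ℝ, 0 < l → l < 1 →
        phiF A k (l • y₁ + (1 - l) • y₂) < max (phiF A k y₁) (phiF A k y₂)) :
    StrictConvex ℝ A := by
  refine strictConvex_iff_forall_lt_one.2 fun a₁ h₁ a₂ h₂ hne l hl0 hl1 => ?_
  have h₁' : a₁ - (0 : ℝ) • k ∈ A := by simpa using h₁
  have h₂' : a₂ - (0 : ℝ) • k ∈ A := by simpa using h₂
  have hlt : phiF A k (l • a₁ + (1 - l) • a₂) < (0 : ℝ) :=
    (hsq a₁ ⟨0, h₁'⟩ a₂ ⟨0, h₂'⟩ hne l hl0 hl1).trans_le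
      (max_le (phiF_le_of_sub_smul_mem h₁') (phiF_le_of_sub_smul_mem h₂'))
  simpa using (phiF_lt_coe_iff hint).1 hlt

lemma phiF_lt_max_of_strictConvex (hAc : IsClosed A)
    (hint : ∀ a ∈ A, ∀ t : ℝ, 0 < t → a - t • k ∈ interior A) (hA : StrictConvex ℝ A)
    {y₁ y₂ : Y} {t₁ t₂ : ℝ} (h₁ : y₁ - t₁ • k ∈ A) (h₂ : y₂ - t₂ • k ∈ A)
    (hbot₁ : phiF A k y₁ ≠ ⊥) (hne : y₁ ≠ y₂) {l : ℝ} (hl0 : 0 < l) (hl1 : l < 1) :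
    phiF A k (l • y₁ + (1 - l) • y₂) < max (phiF A k y₁) (phiF A k y₂) := by
  set M := max (phiF A k y₁) (phiF A k y₂)
  have hM : M = (M.toReal : EReal) := (EReal.coe_toReal
    (max_ne_top (phiF_ne_top_of_sub_smul_mem h₁) (phiF_ne_top_of_sub_smul_mem h₂))
    (ne_bot_of_le_ne_bot hbot₁ (le_max_left _ _))).symm
  have hmem : ∀ y, phiF A k y ≤ M → y - M.toReal • k ∈ A := fun y hy =>
    (phiF_le_coe_iff hAc hint).1 (hM ▸ hy)
  have hcomb := strictConvex_iff_forall_lt_one.1 hA _ (hmem y₁ (le_max_left _ _))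
    _ (hmem y₂ (le_max_right _ _)) (fun h => hne (sub_left_injective h)) l hl0 hl1
  rw [hM, phiF_lt_coe_iff hint]
  convert hcomb using 1
  module

end Topological

theorem stmt_16_general {Y : Type*} [AddCommGroup Y] [Module ℝ Y] [TopologicalSpace Y]
    [IsTopologicalAddGroup Y] [ContinuousSMul ℝ Y]
    (A : Set Y) (hAc : IsClosed A)
    (k : Y) (hint : ∀ a ∈ A, ∀ t : ℝ, 0 < t → a - t • k ∈ interior A) :
    A = closure (interior A) ∧
    algInterior A = interior A ∧
    (∀ t : ℝ, {y | phiF A k y = (t : EReal)} = {y | y - t • k ∈ frontier A}) ∧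
    (((∃ y : Y, phiF A k y ≠ ⊤) ∧ ∀ y : Y, phiF A k y ≠ ⊥) →
      ((Convex ℝ {y | ∃ t : ℝ, y - t • k ∈ A} ∧
          ∀ y₁ ∈ {y | ∃ t : ℝ, y - t • k ∈ A}, ∀ y₂ ∈ {y | ∃ t : ℝ, y - t • k ∈ A},
            y₁ ≠ y₂ → ∀ l : ℝ, 0 < l → l < 1 →
              phiF A k (l • y₁ + (1 - l) • y₂) < max (phiF A k y₁) (phiF A k y₂)) ↔
        (∀ a₁ ∈ A, ∀ a₂ ∈ A, a₁ ≠ a₂ → ∀ l : ℝ, 0 < l → l < 1 →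
          l • a₁ + (1 - l) • a₂ ∈ interior A))) := by
  refine ⟨(subset_closure_interior_of_sub_smul hint).antisymm
      (closure_minimal interior_subset hAc),
    (algInterior_subset_interior_of_sub_smul hint).antisymm (interior_subset_algInterior A),
    fun t => ext fun y => phiF_eq_coe_iff hAc hint, ?_⟩
  rintro ⟨-, hbot⟩
  rw [← strictConvex_iff_forall_lt_one]
  refine ⟨fun ⟨_, hsq⟩ => strictConvex_of_phiF_lt_max hint hsq, fun hA => ⟨?_, ?_⟩⟩
  · exact convex_setOf_exists_sub_smul_mem hA.convex k
  · rintro y₁ ⟨t₁, h₁⟩ y₂ ⟨t₂, h₂⟩ hne l hl0 hl1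
    exact phiF_lt_max_of_strictConvex hAc hint hA h₁ h₂ (hbot y₁) hne hl0 hl1

theorem stmt_16 {Y : Type*} [AddCommGroup Y] [Module ℝ Y] [TopologicalSpace Y]
    [IsTopologicalAddGroup Y] [ContinuousSMul ℝ Y]
    (A : Set Y) (hAc : IsClosed A) (hAne : A.Nonempty) (hAp : A ≠ Set.univ)
    (k : Y) (hk : k ≠ 0) (hint : ∀ a ∈ A, ∀ t : ℝ, 0 < t → a - t • k ∈ interior A) :
    A = closure (interior A) ∧
    algInterior A = interior A ∧
    (∀ t : ℝ, {y | phiF A k y = (t : EReal)} = {y | y - t • k ∈ frontier A}) ∧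
    (((∃ y : Y, phiF A k y ≠ ⊤) ∧ ∀ y : Y, phiF A k y ≠ ⊥) →
      ((Convex ℝ {y | ∃ t : ℝ, y - t • k ∈ A} ∧
          ∀ y₁ ∈ {y | ∃ t : ℝ, y - t • k ∈ A}, ∀ y₂ ∈ {y | ∃ t : ℝ, y - t • k ∈ A},
            y₁ ≠ y₂ → ∀ l : ℝ, 0 < l → l < 1 →
              phiF A k (l • y₁ + (1 - l) • y₂) < max (phiF A k y₁) (phiF A k y₂)) ↔
        (∀ a₁ ∈ A, ∀ a₂ ∈ A, a₁ ≠ a₂ → ∀ l : ℝ, 0 < l → l < 1 →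
          l • a₁ + (1 - l) • a₂ ∈ interior A))) :=
  stmt_16_general A hAc k hint
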